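/- For an n×n matrix U and representatives X̂ ∈ a^{-1}(I), Ŷ ∈ a^{-1}(J), the sum Σ_{Y ∈ a^{-1}(J)} ⟨Y| U^{⊗n} |X̂⟩ equals (1/N_J) · Σ_{σ ∈ S_n} Π_{i=1}^n U_{X̂_i, Ŷ_{σ(i)}}, where N_J = ∏_j J_j!. -/

import Mathlib

/-- `occVec X j` counts the occurrences of mode `j` in the list `X`. -/
def occVec {n m : ℕ} (X : Fin n → Fin m) : Fin m → ℕ :=
  fun j => (Finset.univ.filter fun i => X i = j).card

lemma occVec_eq_count {n m : ℕ} (X : Fin n → Fin m) (j : Fin m) :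
    occVec X j = (List.ofFn X).count j := by
  rw [← Multiset.coe_count, ← Fin.univ_val_map, Multiset.count_map]
  simp only [occVec, Finset.card, Finset.filter_val]
  congr 1
  exact Multiset.filter_congr (fun x _ => by constructor <;> exact fun h => h.symm)

lemma exists_perm_of_occVec_eq {n m : ℕ} {Y Yrep : Fin n → Fin m}
    (h : occVec Y = occVec Yrep) : ∃ σ : Equiv.Perm (Fin n), Yrep ∘ σ = Y := by
  have hperm : List.Perm (List.ofFn Y) (List.ofFn Yrep) := by
    rw [List.perm_iff_count]
    intro j
    rw [← occVec_eq_count, ← occVec_eq_count, h]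
  have key : Y ∘ Tuple.sort Y = Yrep ∘ Tuple.sort Yrep := by
    apply List.ofFn_injective
    refine List.Perm.eq_of_sortedLE ?_ ?_ ?_; rotate_right
    · exact ((Tuple.sort Y).ofFn_comp_perm Y).trans
        (hperm.trans ((Tuple.sort Yrep).ofFn_comp_perm Yrep).symm)
    · exact (Tuple.monotone_sort Y).sortedLE_ofFn
    · exact (Tuple.monotone_sort Yrep).sortedLE_ofFn
  refine ⟨(Tuple.sort Y).symm.trans (Tuple.sort Yrep), ?_⟩
  funext i
  have := congrFun key ((Tuple.sort Y).symm i)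
  simpa using this.symm

lemma occVec_comp_perm {n m : ℕ} (Y : Fin n → Fin m) (σ : Equiv.Perm (Fin n)) :
    occVec (Y ∘ σ) = occVec Y := by
  funext j
  rw [occVec_eq_count, occVec_eq_count]
  exact (σ.ofFn_comp_perm Y).count_eq j

/-- Key combinatorial step: with `⟨Y| U^{⊗n} |X⟩ = ∏_i U (X i) (Y i)`,
`Σ_{Y ∈ a⁻¹(J)} ⟨Y| U^{⊗n} |X̂⟩ = (1/N_J) · Σ_{σ ∈ S_n} ∏_i U (X̂ i) (Ŷ (σ i))`
where `N_J = ∏_j J_j!` and `Ŷ` is any fixed element of `a⁻¹(J)`. -/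
theorem sum_fiber_eq_perm_sum {n m : ℕ} (U : Matrix (Fin m) (Fin m) ℂ)
    (J : Fin m → ℕ) (hJ : ∑ j, J j = n)
    (Xrep Yrep : Fin n → Fin m) (hY : occVec Yrep = J) :
    ∑ Y ∈ Finset.univ.filter (fun Y : Fin n → Fin m => occVec Y = J),
        ∏ i, U (Xrep i) (Y i) =
      (1 / (∏ j, (J j).factorial : ℂ)) *
        ∑ σ : Equiv.Perm (Fin n), ∏ i, U (Xrep i) (Yrep (σ i)) := by
  classical
  set F : (Fin n → Fin m) → ℂ := fun Y => ∏ i, U (Xrep i) (Y i) with hF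
  have himage : (Finset.univ : Finset (Equiv.Perm (Fin n))).image
        (fun σ : Equiv.Perm (Fin n) => Yrep ∘ ⇑σ)
      = Finset.univ.filter (fun Y : Fin n → Fin m => occVec Y = J) := by
    ext Y
    simp only [Finset.mem_image, Finset.mem_filter, Finset.mem_univ, true_and]
    constructor
    · rintro ⟨σ, -, rfl⟩
      rw [occVec_comp_perm, hY]
    · intro h
      obtain ⟨σ, hσ⟩ := exists_perm_of_occVec_eq (h.trans hY.symm)
      exact ⟨σ, hσ⟩
  have hcard : ∀ b ∈ Finset.univ.filter (fun Y : Fin n → Fin m => occVec Y = J),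
      (Finset.univ.filter fun σ : Equiv.Perm (Fin n) => Yrep ∘ ⇑σ = b).card
        = ∏ j, (J j).factorial := by
    intro b hb
    rw [Finset.mem_filter] at hb
    obtain ⟨σ₀, hσ₀⟩ := exists_perm_of_occVec_eq (hb.2.trans hY.symm)
    have e : {σ : Equiv.Perm (Fin n) // Yrep ∘ ⇑σ = b}
        ≃ {σ : Equiv.Perm (Fin n) // Yrep ∘ ⇑σ = Yrep} :=
      { toFun := fun ⟨σ, hσ⟩ => ⟨σ * σ₀⁻¹, by
          funext i
          have h1 := congrFun hσ (σ₀⁻¹ i)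
          have h2 := congrFun hσ₀ (σ₀⁻¹ i)
          rw [Function.comp_apply, Equiv.Perm.inv_def, Equiv.apply_symm_apply] at h2
          simp only [Function.comp_apply, Equiv.Perm.mul_apply] at h1 ⊢
          exact h1.trans h2.symm⟩
        invFun := fun ⟨τ, hτ⟩ => ⟨τ * σ₀, by
          funext i
          have h1 := congrFun hτ (σ₀ i)
          have h2 := congrFun hσ₀ i
          simp only [Function.comp_apply, Equiv.Perm.mul_apply] at h1 h2 ⊢
          rw [h1, h2]⟩
        left_inv := fun ⟨σ, _⟩ => by simp [mul_assoc]
        right_inv := fun ⟨τ, _⟩ => by simp [mul_assoc] }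
    calc (Finset.univ.filter fun σ : Equiv.Perm (Fin n) => Yrep ∘ ⇑σ = b).card
        = Fintype.card {σ : Equiv.Perm (Fin n) // Yrep ∘ ⇑σ = b} :=
          (Fintype.card_subtype _).symm
      _ = Fintype.card {σ : Equiv.Perm (Fin n) // Yrep ∘ ⇑σ = Yrep} := Fintype.card_congr e
      _ = ∏ j, (Fintype.card {a // Yrep a = j}).factorial := DomMulAct.stabilizer_card Yrep
      _ = ∏ j, (J j).factorial := by
          refine Finset.prod_congr rfl fun j _ => ?_
          rw [Fintype.card_subtype]
          exact congrArg Nat.factorial (congrFun hY j)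
  have hsum : ∑ σ : Equiv.Perm (Fin n), F (Yrep ∘ ⇑σ)
      = ∑ Y ∈ Finset.univ.filter (fun Y : Fin n → Fin m => occVec Y = J),
          ((∏ j, (J j).factorial : ℕ) : ℂ) * F Y := by
    rw [Finset.sum_comp F (fun σ : Equiv.Perm (Fin n) => Yrep ∘ ⇑σ), himage]
    refine Finset.sum_congr rfl fun b hb => ?_
    rw [hcard b hb, nsmul_eq_mul]
  have hN : ((∏ j, (J j).factorial : ℕ) : ℂ) ≠ 0 := by
    have : 0 < ∏ j, (J j).factorial := Finset.prod_pos fun j _ => (J j).factorial_pos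
    exact_mod_cast this.ne'
  have hsig : ∑ σ : Equiv.Perm (Fin n), ∏ i, U (Xrep i) (Yrep (σ i))
      = ∑ σ : Equiv.Perm (Fin n), F (Yrep ∘ ⇑σ) := rfl
  rw [hsig, hsum, ← Finset.mul_sum]
  push_cast
  rw [one_div, inv_mul_cancel_left₀]
  exact_mod_cast hN
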